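/- Every weighted sequence X of length n over a nonempty finite alphabet Σ and every real threshold z ≥ 1 admit a z-estimation: there exist ⌊z⌋ strings S_1,…,S_{⌊z⌋} of length n over Σ and property arrays π_1,…,π_{⌊z⌋} such that for every string P over Σ and every position i ∈ {1,…,n}, the number of indices j with i ∈ Occ_{π_j}(P,S_j) equals ⌊z·P_X(P,i)⌋. -/

import Mathlib

open scoped Classical
open Finset

variable {α : Type*}

/-- Matching probability `P_X(P,i)` of pattern `P` at (1-based) position `i`
in a weighted sequence of length `n` with letter probabilities `p`. -/
def matchProb (n : ℕ) (p : ℕ → α → ℝ) : List α → ℕ → ℝ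
  | [], _ => 1
  | c :: P, i => if i ≤ n then p i c * matchProb n p P (i + 1) else 0

/-- `p` describes a weighted sequence of length `n`: at each position `i ∈ {1,…,n}`
the letter probabilities are nonnegative and sum to 1. -/
def IsWeighted [Fintype α] (n : ℕ) (p : ℕ → α → ℝ) : Prop :=
  ∀ i, 1 ≤ i → i ≤ n → (∀ c, 0 ≤ p i c) ∧ ∑ c, p i c = 1

/-- A property array for strings of length `n`:
`π i ∈ {i-1,…,n}` for `i ∈ {1,…,n}` and `π` is nondecreasing on `{1,…,n}`. -/
def IsPropertyArray (n : ℕ) (π : ℕ → ℕ) : Prop :=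
  (∀ i, 1 ≤ i → i ≤ n → i - 1 ≤ π i ∧ π i ≤ n) ∧
    ∀ i, 1 ≤ i → i + 1 ≤ n → π i ≤ π (i + 1)

/-- The factor `S[i..j]` (1-based, empty when `j < i`). -/
def factor (S : List α) (i j : ℕ) : List α := (S.drop (i - 1)).take (j + 1 - i)

/-- `i ∈ Occ_π(P,S)`: `P = S[i..i+|P|-1]` and `i+|P|-1 ≤ π i`. -/
def occursAt (S : List α) (π : ℕ → ℕ) (P : List α) (i : ℕ) : Prop :=
  factor S i (i + P.length - 1) = P ∧ i + P.length - 1 ≤ π i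

/-- `Count_𝒮(P,i)`: number of members of the family in which `P` occurs at `i`
respecting the property. -/
noncomputable def countOcc {k : ℕ} (S : Fin k → List α) (π : Fin k → ℕ → ℕ)
    (P : List α) (i : ℕ) : ℕ :=
  (Finset.univ.filter fun j => occursAt (S j) (π j) P i).card

/-- `P` is compatible with `Q` if `P = ε` or `P = cQ'` for a letter `c` and a prefix `Q'` of `Q`. -/
def Compatible (P Q : List α) : Prop :=
  P = [] ∨ ∃ (c : α) (Q' : List α), Q' <+: Q ∧ P = c :: Q'

/-- A random string `S : Fin n → α` matches pattern `P` at (1-based) position `i`. -/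
def Matches {n : ℕ} (S : Fin n → α) (P : List α) (i : ℕ) : Prop :=
  ((List.ofFn S).drop (i - 1)).take P.length = P

/-- The probability of the outcome `S` under the product distribution determined by `p`. -/
def strWeight (n : ℕ) (p : ℕ → α → ℝ) (S : Fin n → α) : ℝ :=
  ∏ j : Fin n, p ((j : ℕ) + 1) (S j)

/-!
Write `T i j` for the window `S_j[i..π_j(i)]`. Then `i ∈ Occ_{π_j}(P, S_j)` iff `P` is a prefix
of `T i j`, and `π_j` is a property array as soon as `(T i j).tail` is a prefix of `T (i+1) j`.
So it suffices to build, from `i = n + 1` down to `1`, families of windows whose prefix counts are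
`g_i(Q) = ⌊z·P_X(Q,i)⌋`. Since the floor is superadditive and the letter probabilities at a
position sum to one, `g_i` is the prefix-count function of some multiset of strings, and
`∑_c g_i(cQ) ≤ g_{i+1}(Q)`. The latter is Hall's condition for assigning to each string `cQ'` of
that multiset a distinct old window having `Q'` as a prefix; in the prefix tree such an assignment
is found greedily, serving the longest `Q'` first.
-/

section MatchProb
variable {n : ℕ} {p : ℕ → α → ℝ}

theorem matchProb_append (Q R : List α) (i : ℕ) :
    matchProb n p (Q ++ R) i = matchProb n p Q i * matchProb n p R (i + Q.length) := by
  induction Q generalizing i with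
  | nil => simp [matchProb]
  | cons c Q ih =>
    simp only [List.cons_append, matchProb, ih, List.length_cons]
    split_ifs
    · rw [show i + 1 + Q.length = i + (Q.length + 1) by omega, mul_assoc]
    · simp

theorem matchProb_singleton (c : α) (i : ℕ) :
    matchProb n p [c] i = if i ≤ n then p i c else 0 := by
  simp [matchProb]

theorem matchProb_eq_zero_of_lt (Q : List α) {i : ℕ} (hi : i ≤ n + 1)
    (hQ : n + 1 < i + Q.length) : matchProb n p Q i = 0 := by
  induction Q generalizing i with
  | nil => simp at hQ; omega
  | cons c Q ih =>
    simp only [matchProb]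
    split_ifs with h
    · rw [ih (by omega) (by simp at hQ; omega), mul_zero]
    · rfl

variable [Fintype α]

theorem matchProb_nonneg (hp : IsWeighted n p) (Q : List α) {i : ℕ} (hi : 1 ≤ i) :
    0 ≤ matchProb n p Q i := by
  induction Q generalizing i with
  | nil => simp [matchProb]
  | cons c Q ih =>
    simp only [matchProb]
    split_ifs with h
    · exact mul_nonneg ((hp i hi h).1 c) (ih (by omega))
    · rfl

theorem sum_matchProb_singleton_le_one (hp : IsWeighted n p) {i : ℕ} (hi : 1 ≤ i) :
    ∑ c, matchProb n p [c] i ≤ 1 := by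
  simp only [matchProb_singleton]
  split_ifs with h
  · exact (hp i hi h).2.le
  · simp

end MatchProb

theorem sum_floor_mul_le_floor {ι : Type*} (s : Finset ι) {x : ℝ} (hx : 0 ≤ x) {a : ι → ℝ}
    (ha : ∀ c ∈ s, 0 ≤ a c) (hsum : ∑ c ∈ s, a c ≤ 1) :
    ∑ c ∈ s, ⌊x * a c⌋₊ ≤ ⌊x⌋₊ := by
  refine Nat.le_floor ?_
  push_cast
  calc ∑ c ∈ s, (⌊x * a c⌋₊ : ℝ) ≤ ∑ c ∈ s, x * a c :=
        Finset.sum_le_sum fun c hc => Nat.floor_le (mul_nonneg hx (ha c hc))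
    _ = x * ∑ c ∈ s, a c := (Finset.mul_sum _ _ _).symm
    _ ≤ x := mul_le_of_le_one_right hx hsum

section PrefixCount

theorem exists_map_eq_of_countP_prefix_le {ι β : Type*} [Nonempty β] (key : β → List α)
    (t : ι → List α) (M : Multiset β) (s : Finset ι) (hcard : Multiset.card M = #s)
    (hHall : ∀ Q, M.countP (fun b => Q <+: key b) ≤ #{j ∈ s | Q <+: t j}) :
    ∃ t' : ι → β, (∀ j ∈ s, key (t' j) <+: t j) ∧ s.val.map t' = M := by
  induction M using Multiset.strongInductionOn generalizing s with
  | ih M ih =>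
  rcases eq_or_ne M 0 with rfl | hM
  · obtain rfl : s = ∅ := by simpa [eq_comm] using hcard
    exact ⟨fun _ => Classical.arbitrary β, by simp, by simp⟩
  -- serve a demand of maximal key length first
  obtain ⟨b₀, hb₀, hmax⟩ := Multiset.exists_max_image (fun b => (key b).length) hM
  obtain ⟨j₀, hj₀⟩ : ∃ j₀, j₀ ∈ s ∧ key b₀ <+: t j₀ := by
    simpa [Finset.Nonempty] using
      (Multiset.countP_pos.2 ⟨b₀, hb₀, List.prefix_rfl⟩).trans_le (hHall (key b₀))
  set M' := M.erase b₀
  set s' := s.erase j₀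
  have hM' : M = b₀ ::ₘ M' := (Multiset.cons_erase hb₀).symm
  have hs' : s = insert j₀ s' := (insert_erase hj₀.1).symm
  have hj₀s' : j₀ ∉ s' := notMem_erase j₀ s
  have hHall' : ∀ Q, M'.countP (fun b => Q <+: key b) ≤ #{j ∈ s' | Q <+: t j} := by
    intro Q
    have h := hHall Q
    rw [hM', Multiset.countP_cons, hs', filter_insert] at h
    by_cases hQt : Q <+: t j₀
    · by_cases hQb : Q <+: key b₀
      · simpa [hQt, hQb, hj₀s'] using h
      · -- `key b₀` is then a proper prefix of `Q`, and no key in `M` is that long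
        have hlt : (key b₀).length < Q.length := by
          rcases List.prefix_or_prefix_of_prefix hQt hj₀.2 with h' | h'
          · exact absurd h' hQb
          · exact lt_of_le_of_ne h'.length_le fun he =>
              hQb (h'.eq_of_length he ▸ List.prefix_rfl)
        rw [Multiset.countP_eq_zero.2 fun b hb hQ =>
          (hQ.length_le.trans (hmax b (Multiset.mem_of_mem_erase hb))).not_gt hlt]
        exact Nat.zero_le _
    · simp only [hQt, if_false] at h
      omega
  obtain ⟨t', ht', hmap⟩ := ih M' (hM' ▸ Multiset.lt_cons_self _ _) s'
    (by rw [hM', hs'] at hcard; simpa [hj₀s'] using hcard) hHall'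
  refine ⟨Function.update t' j₀ b₀, fun j hj => ?_, ?_⟩
  · rcases eq_or_ne j j₀ with rfl | hj'
    · simpa using hj₀.2
    · simpa [hj'] using ht' j (mem_erase.2 ⟨hj', hj⟩)
  · rw [hs', insert_val_of_notMem hj₀s', Multiset.map_cons, Function.update_self, hM', ← hmap]
    congr 1
    exact Multiset.map_congr rfl fun j hj =>
      Function.update_of_ne (ne_of_mem_of_not_mem hj hj₀s') _ _

variable [Fintype α]

theorem Multiset.countP_prefix_tail (M : Multiset (List α)) {Q : List α} (hQ : Q ≠ []) :
    M.countP (fun w => Q <+: w.tail) = ∑ c, M.countP (c :: Q <+: ·) := by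
  induction M using Multiset.induction_on with
  | empty => simp
  | cons w M ih =>
    simp only [Multiset.countP_cons, ih, Finset.sum_add_distrib, add_right_inj]
    cases w with
    | nil => simp [List.prefix_nil, hQ]
    | cons a w => by_cases h : Q <+: w <;> simp [List.cons_prefix_cons, h]

theorem exists_multiset_countP_prefix_eq (g : List α → ℕ) (L : ℕ)
    (hg : ∀ Q, ∑ c, g (Q ++ [c]) ≤ g Q) (hL : ∀ Q, L ≤ Q.length → g Q = 0) :
    ∃ M : Multiset (List α), ∀ Q, M.countP (Q <+: ·) = g Q := by
  induction L generalizing g with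
  | zero => exact ⟨0, fun Q => by simp [hL Q (Nat.zero_le _)]⟩
  | succ L ih =>
    choose M hM using fun c => ih (fun Q => g (c :: Q)) (fun Q => hg (c :: Q))
      (fun Q hQ => hL (c :: Q) (by simpa using hQ))
    refine ⟨Multiset.replicate (g [] - ∑ c, g [c]) [] + ∑ c, (M c).map (c :: ·), ?_⟩
    rintro (_ | ⟨q, Q⟩)
    · have hcard (c : α) : (M c).card = g [c] := by simpa using hM c []
      have := hg []
      simp only [List.nil_append] at this
      simp [hcard, Nat.sub_add_cancel this]
    · have hnil : (Multiset.replicate (g [] - ∑ c, g [c]) []).countP (q :: Q <+: ·) = 0 :=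
        Multiset.countP_eq_zero.2 fun w hw => by simp [Multiset.eq_of_mem_replicate hw]
      have hcons (c : α) :
          ((M c).map (c :: ·)).countP (q :: Q <+: ·) = if c = q then g (q :: Q) else 0 := by
        rw [Multiset.countP_map, ← Multiset.countP_eq_card_filter]
        split_ifs with hc
        · subst hc
          simpa using hM c Q
        · simp [Ne.symm hc]
      rw [Multiset.countP_add, ← Multiset.coe_countPAddMonoidHom, map_sum]
      simp [hnil, hcons]

theorem exists_tail_prefix_family {ι : Type*} [Fintype ι] (t : ι → List α) (g : List α → ℕ)
    (L : ℕ) (hg₀ : g [] = Fintype.card ι) (hg : ∀ Q, ∑ c, g (Q ++ [c]) ≤ g Q)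
    (hL : ∀ Q, L ≤ Q.length → g Q = 0) (ht : ∀ Q, ∑ c, g (c :: Q) ≤ #{j | Q <+: t j}) :
    ∃ t' : ι → List α, (∀ j, (t' j).tail <+: t j) ∧ ∀ Q, #{j | Q <+: t' j} = g Q := by
  obtain ⟨M, hM⟩ := exists_multiset_countP_prefix_eq g L hg hL
  have hcard : Multiset.card M = Fintype.card ι := by simpa [hg₀] using hM []
  have hHall (Q : List α) : M.countP (fun w => Q <+: w.tail) ≤ #{j | Q <+: t j} := by
    rcases eq_or_ne Q [] with rfl | hQ
    · simp [hcard]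
    · simpa [M.countP_prefix_tail hQ, hM] using ht Q
  obtain ⟨t', ht', hmap⟩ := exists_map_eq_of_countP_prefix_le List.tail t M univ hcard
    (by simpa using hHall)
  refine ⟨t', fun j => ht' j (mem_univ j), fun Q => ?_⟩
  rw [← hM Q, ← hmap, Multiset.countP_map, card_def, filter_val]

end PrefixCount

theorem exists_seq_of_downward_step {X : Type*} (P : ℕ → X → Prop) (R : ℕ → X → X → Prop)
    {n : ℕ} {x : X} (hx : P (n + 1) x)
    (step : ∀ i x, 1 ≤ i → i ≤ n → P (i + 1) x → ∃ y, R i y x ∧ P i y) :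
    ∃ T : ℕ → X, (∀ i, 1 ≤ i → i ≤ n → R i (T i) (T (i + 1))) ∧
      ∀ i, 1 ≤ i → i ≤ n + 1 → P i (T i) := by
  have step' (i : ℕ) (x : X) : ∃ y, 1 ≤ i → i ≤ n → P (i + 1) x → R i y x ∧ P i y := by
    by_cases h : 1 ≤ i ∧ i ≤ n ∧ P (i + 1) x
    · obtain ⟨y, hy⟩ := step i x h.1 h.2.1 h.2.2
      exact ⟨y, fun _ _ _ => hy⟩
    · exact ⟨x, fun h₁ h₂ h₃ => absurd ⟨h₁, h₂, h₃⟩ h⟩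
  choose F hF using step'
  -- `U e` is the term at index `n + 1 - e`
  let U : ℕ → X := fun e => Nat.rec x (fun e y => F (n - e) y) e
  have hU : ∀ e, e ≤ n → P (n + 1 - e) (U e) := by
    intro e
    induction e with
    | zero => exact fun _ => hx
    | succ e ih =>
      intro he
      have := (hF (n - e) (U e) (by omega) (by omega)
        (by rw [show n - e + 1 = n + 1 - e by omega]; exact ih (by omega))).2
      rwa [show n + 1 - (e + 1) = n - e by omega]
  refine ⟨fun i => U (n + 1 - i), fun i hi hin => ?_, fun i hi hin => ?_⟩
  · have hU' : U (n + 1 - i) = F i (U (n + 1 - (i + 1))) := by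
      rw [show n + 1 - i = (n - i) + 1 by omega, show n + 1 - (i + 1) = n - i by omega]
      show F (n - (n - i)) _ = _
      rw [Nat.sub_sub_self hin]
    have := hU (n + 1 - (i + 1)) (by omega)
    rw [show n + 1 - (n + 1 - (i + 1)) = i + 1 by omega] at this
    simpa only [hU'] using (hF i _ hi hin this).1
  · simpa [Nat.sub_sub_self hin] using hU (n + 1 - i) (by omega)

section Windows
variable [Inhabited α] {n : ℕ} {w : ℕ → List α}

def windowString (n : ℕ) (w : ℕ → List α) : List α :=
  List.ofFn fun r : Fin n => (w (r + 1)).headI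

def windowArray (w : ℕ → List α) (i : ℕ) : ℕ :=
  i - 1 + (w i).length

theorem length_windowString : (windowString n w).length = n :=
  List.length_ofFn

variable (htail : ∀ i, 1 ≤ i → i ≤ n → (w i).tail <+: w (i + 1))
  (hlen : ∀ i, 1 ≤ i → i ≤ n + 1 → (w i).length ≤ n + 1 - i)
include htail hlen

theorem prefix_drop_windowString {i : ℕ} (hi : 1 ≤ i) (hin : i ≤ n + 1) :
    w i <+: (windowString n w).drop (i - 1) := by
  induction hin using Nat.decreasingInduction with
  | self => simp [List.eq_nil_of_length_eq_zero (by simpa using hlen (n + 1) (by omega) le_rfl)]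
  | of_succ i hin ih =>
    have hdrop : (windowString n w).drop (i - 1)
        = (w i).headI :: (windowString n w).drop i := by
      rw [List.drop_eq_getElem_cons (by rw [length_windowString]; omega)]
      simp [windowString, Nat.sub_add_cancel hi]
    rw [hdrop]
    rcases hw : w i with _ | ⟨c, u⟩
    · exact List.nil_prefix
    · have := (htail i hi (by omega)).trans (ih (by omega))
      simpa [hw] using this

omit [Inhabited α] in
theorem isPropertyArray_windowArray : IsPropertyArray n (windowArray w) := by
  refine ⟨fun i hi hin => ?_, fun i hi hin => ?_⟩
  · have := hlen i hi (by omega)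
    unfold windowArray
    omega
  · have h1 := (htail i hi (by omega)).length_le
    have h2 : (w i).length ≤ (w i).tail.length + 1 := by rw [List.length_tail]; omega
    unfold windowArray
    omega

theorem occursAt_windowString_iff {i : ℕ} (hi : 1 ≤ i) (hin : i ≤ n) (P : List α) :
    occursAt (windowString n w) (windowArray w) P i ↔ P <+: w i := by
  have hw := prefix_drop_windowString htail hlen hi (by omega)
  rw [occursAt, factor, windowArray, show i + P.length - 1 + 1 - i = P.length by omega,
    eq_comm, ← List.prefix_iff_eq_take]
  constructor
  · rintro ⟨hP, hle⟩
    exact List.prefix_of_prefix_length_le hP hw (by omega)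
  · intro hP
    exact ⟨hP.trans hw, by have := hP.length_le; omega⟩

end Windows

section Estimation
variable {n : ℕ} {p : ℕ → α → ℝ} {z : ℝ}

theorem length_le_of_card_prefix_eq {ι : Type*} [Fintype ι] {t : ι → List α} {i : ℕ}
    (hi : i ≤ n + 1) (ht : ∀ Q, #{j | Q <+: t j} = ⌊z * matchProb n p Q i⌋₊) (j : ι) :
    (t j).length ≤ n + 1 - i := by
  by_contra! h
  have hpos : 0 < #{j' | t j <+: t j'} := card_pos.2 ⟨j, by simp⟩
  rw [ht, matchProb_eq_zero_of_lt _ hi (by omega), mul_zero, Nat.floor_zero] at hpos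
  exact hpos.false

variable [Fintype α]

theorem exists_families_card_prefix_eq_floor (hp : IsWeighted n p) (hz : 0 ≤ z) :
    ∃ T : ℕ → Fin ⌊z⌋₊ → List α,
      (∀ i, 1 ≤ i → i ≤ n → ∀ j, (T i j).tail <+: T (i + 1) j) ∧
      ∀ i, 1 ≤ i → i ≤ n + 1 → ∀ Q, #{j | Q <+: T i j} = ⌊z * matchProb n p Q i⌋₊ := by
  refine exists_seq_of_downward_step
    (fun i (t : Fin ⌊z⌋₊ → List α) => ∀ Q, #{j | Q <+: t j} = ⌊z * matchProb n p Q i⌋₊)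
    (fun _ t' t => ∀ j, (t' j).tail <+: t j) (x := fun _ => []) ?_ fun i t hi hin ht => ?_
  · rintro (_ | ⟨c, Q⟩) <;> simp [matchProb]
  · refine exists_tail_prefix_family t _ (n + 1) (by simp [matchProb]) (fun Q => ?_)
      (fun Q hQ => ?_) (fun Q => ?_)
    · simp only [matchProb_append, ← mul_assoc]
      exact sum_floor_mul_le_floor _ (mul_nonneg hz (matchProb_nonneg hp Q (by omega)))
        (fun c _ => matchProb_nonneg hp _ (by omega)) (sum_matchProb_singleton_le_one hp (by omega))
    · rw [matchProb_eq_zero_of_lt Q (by omega) (by omega), mul_zero, Nat.floor_zero]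
    · rw [ht Q]
      have hcons (c : α) :
          z * matchProb n p (c :: Q) i = z * matchProb n p Q (i + 1) * matchProb n p [c] i := by
        rw [← List.singleton_append, matchProb_append, List.length_singleton]
        ring
      simp only [hcons]
      exact sum_floor_mul_le_floor _ (mul_nonneg hz (matchProb_nonneg hp Q (by omega)))
        (fun c _ => matchProb_nonneg hp _ hi) (sum_matchProb_singleton_le_one hp hi)

end Estimation

/-- every weighted sequence admits a `z`-estimation. -/
theorem exists_zEstimation [Fintype α] [Nonempty α]
    (n : ℕ) (p : ℕ → α → ℝ) (hp : IsWeighted n p) (z : ℝ) (hz : 1 ≤ z) :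
    ∃ (S : Fin ⌊z⌋₊ → List α) (π : Fin ⌊z⌋₊ → ℕ → ℕ),
      (∀ j, (S j).length = n) ∧ (∀ j, IsPropertyArray n (π j)) ∧
      ∀ (P : List α) (i : ℕ), 1 ≤ i → i ≤ n →
        countOcc S π P i = ⌊z * matchProb n p P i⌋₊ := by
  inhabit α
  obtain ⟨T, htail, hcount⟩ := exists_families_card_prefix_eq_floor hp (zero_le_one.trans hz)
  have hlen (i : ℕ) (hi : 1 ≤ i) (hin : i ≤ n + 1) (j : Fin ⌊z⌋₊) :
      (T i j).length ≤ n + 1 - i :=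
    length_le_of_card_prefix_eq hin (hcount i hi hin) j
  refine ⟨fun j => windowString n (T · j), fun j => windowArray (T · j),
    fun j => length_windowString, fun j => isPropertyArray_windowArray
      (fun i hi hin => htail i hi hin j) (fun i hi hin => hlen i hi hin j),
    fun P i hi hin => ?_⟩
  rw [countOcc, ← hcount i hi (by omega) P]
  congr 1
  exact filter_congr fun j _ => occursAt_windowString_iff (fun i hi hin => htail i hi hin j)
    (fun i hi hin => hlen i hi hin j) hi hin P
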